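/- arXiv:2007.15282 — 4 statements merged into one kernel-verified Lean document; each statement's English description precedes it below -/
import Mathlib

section
/- For every real p > 60184, π(p + p/(log p - 1)) - π(p) ≥ 1, assuming the Dusart bounds π(x) ≤ x/(log x - 1.1) for x ≥ 60184 and π(x) ≥ x/(log x - 1) for x ≥ 5393. -/
/-!
Write `L = log p` and `y = p + p / (L - 1) = p L / (L - 1)`. Since `log (L / (L - 1)) ≤ 1 / (L - 1)`,
the lower Dusart bound at `y` gives `π(y) ≥ p L / ((L - 1)² + 1)`, while the upper bound gives
`π(p) ≤ p / (L - 1.1)`. The difference of these bounds is `p (0.9 L - 2) / (((L - 1)² + 1)(L - 1.1))`,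
which is at least `1` because `p = exp L ≥ L⁴ / 24` beats the cubic denominator once `L ≥ 11`.
-/

open Real

lemma eleven_le_log_of_60184_le {p : ℝ} (hp : 60184 ≤ p) : 11 ≤ log p := by
  have hexp : exp 11 ≤ 60184 :=
    calc exp 11 = exp 1 ^ 11 := by rw [← exp_nat_mul]; norm_num
      _ ≤ 2.7182818286 ^ 11 := pow_le_pow_left₀ (exp_pos 1).le exp_one_lt_d9.le 11
      _ ≤ 60184 := by norm_num
  rw [le_log_iff_exp_le (by linarith)]
  linarith

lemma log_add_div_log_sub_one_le {p : ℝ} (hp : 0 < p) (hL : 1 < log p) :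
    log (p + p / (log p - 1)) ≤ log p + 1 / (log p - 1) := by
  set L := log p
  have hL1 : 0 < L - 1 := by linarith
  have hratio : 0 < L / (L - 1) := div_pos (by linarith) hL1
  have hy : p + p / (L - 1) = p * (L / (L - 1)) := by field_simp; ring
  have hlog_ratio : L / (L - 1) - 1 = 1 / (L - 1) := by field_simp; ring
  rw [hy, log_mul hp.ne' hratio.ne']
  linarith [log_le_sub_one_of_pos hratio]

lemma mul_log_div_le_div_log_add_div_log_sub_one {p : ℝ} (hp : 0 < p) (hL : 1 < log p) :
    p * log p / ((log p - 1) ^ 2 + 1) ≤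
      (p + p / (log p - 1)) / (log (p + p / (log p - 1)) - 1) := by
  set L := log p
  set y := p + p / (L - 1)
  have hL1 : 0 < L - 1 := by linarith
  have hpy : p ≤ y := le_add_of_nonneg_right (div_pos hp hL1).le
  have hlogy : 0 < log y - 1 := by linarith [log_le_log hp hpy]
  have hy_div : y / (L - 1 + 1 / (L - 1)) = p * L / ((L - 1) ^ 2 + 1) := by
    simp only [y]; field_simp; ring
  rw [← hy_div]
  refine div_le_div_of_nonneg_left (hp.trans_le hpy).le hlogy ?_
  linarith [log_add_div_log_sub_one_le hp hL]

lemma cubic_le_pow_four_mul {L : ℝ} (hL : 11 ≤ L) :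
    ((L - 1) ^ 2 + 1) * (L - 1.1) ≤ L ^ 4 / 24 * (0.9 * L - 2) := by
  obtain ⟨t, ht, rfl⟩ : ∃ t, 0 ≤ t ∧ L = 11 + t := ⟨L - 11, by linarith, by ring⟩
  nlinarith [pow_nonneg ht 2, pow_nonneg ht 3, pow_nonneg ht 4, pow_nonneg ht 5]

lemma one_le_mul_log_div_sub_div {p : ℝ} (hp : 0 < p) (hL : 11 ≤ log p) :
    1 ≤ p * log p / ((log p - 1) ^ 2 + 1) - p / (log p - 1.1) := by
  set L := log p
  have hL11 : 0 < L - 1.1 := by linarith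
  have hden : 0 < ((L - 1) ^ 2 + 1) * (L - 1.1) := by positivity
  have hpL : L ^ 4 / 24 ≤ p := by
    simpa [L, exp_log hp, Nat.factorial] using pow_div_factorial_le_exp (x := L) (by linarith) 4
  have hdiff : p * L / ((L - 1) ^ 2 + 1) - p / (L - 1.1) =
      p * (0.9 * L - 2) / (((L - 1) ^ 2 + 1) * (L - 1.1)) := by
    field_simp; ring
  rw [hdiff, le_div_iff₀ hden, one_mul]
  calc ((L - 1) ^ 2 + 1) * (L - 1.1) ≤ L ^ 4 / 24 * (0.9 * L - 2) := cubic_le_pow_four_mul hL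
    _ ≤ p * (0.9 * L - 2) := mul_le_mul_of_nonneg_right hpL (by linarith)

theorem pi_gap_ge_one_of_dusart
    (hupper : ∀ x : ℝ, 60184 ≤ x → (Nat.primeCounting ⌊x⌋₊ : ℝ) ≤ x / (Real.log x - 1.1))
    (hlower : ∀ x : ℝ, 5393 ≤ x → x / (Real.log x - 1) ≤ (Nat.primeCounting ⌊x⌋₊ : ℝ))
    (p : ℝ) (hp : 60184 < p) :
    1 ≤ (Nat.primeCounting ⌊p + p / (Real.log p - 1)⌋₊ : ℝ) - (Nat.primeCounting ⌊p⌋₊ : ℝ) := by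
  have hp0 : 0 < p := by linarith
  have hL : 11 ≤ log p := eleven_le_log_of_60184_le hp.le
  have hy : 5393 ≤ p + p / (log p - 1) := by
    linarith [div_pos hp0 (by linarith : (0 : ℝ) < log p - 1)]
  linarith [hlower _ hy, hupper p hp.le, one_le_mul_log_div_sub_div hp0 hL,
    mul_log_div_le_div_log_add_div_log_sub_one hp0 (by linarith)]
end

section
/- For every real p > 60184, (p + p/(log p - 1))/(log(p + p/(log p - 1)) - 1) - p/(log p - 1.1) > 0.9·p/(log p)² > 1. -/
/-!
Write `L = log p` and `q = p + p / (L - 1) = p L / (L - 1)`. Since `log (1 + y) ≤ y`,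
`log q ≤ L + 1 / (L - 1)`, so `q / (log q - 1) ≥ p L / ((L - 1)² + 1)`. Clearing denominators,
`p L / ((L - 1)² + 1) - p / (L - 1.1) - 0.9 p / L²` has the sign of `0.79 L² - 3.78 L + 1.98`,
which is positive once `L ≥ 5`. For the second inequality, `log p ≤ 4 p^(1/4)` gives
`L² ≤ 16 √p < 0.9 p`.
-/

open Real

lemma Real.exp_five_lt : exp 5 < 149 := by
  have h := exp_one_lt_d9
  calc exp 5 = exp 1 ^ 5 := by rw [← exp_nat_mul]; norm_num
    _ < 2.7182818286 ^ 5 := by gcongr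
    _ < 149 := by norm_num

lemma Real.log_add_div_le {x a : ℝ} (hx : 0 < x) (ha : 0 < a) :
    log (x + x / a) ≤ log x + 1 / a := by
  have h1a : 0 < 1 + 1 / a := by positivity
  rw [show x + x / a = x * (1 + 1 / a) by ring, log_mul hx.ne' h1a.ne']
  linarith [log_le_sub_one_of_pos h1a]

lemma Real.mul_log_div_le_div_log_add_div_sub_one {x : ℝ} (hx : 0 < x) (hL : 1 < log x) :
    x * log x / ((log x - 1) ^ 2 + 1) ≤
      (x + x / (log x - 1)) / (log (x + x / (log x - 1)) - 1) := by
  set L := log x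
  have hL1 : 0 < L - 1 := by linarith
  have hlogq_ge : L ≤ log (x + x / (L - 1)) :=
    log_le_log hx (le_add_of_nonneg_right (by positivity))
  have hlogq_le := log_add_div_le hx hL1
  calc x * L / ((L - 1) ^ 2 + 1) = (x + x / (L - 1)) / (L - 1 + 1 / (L - 1)) := by
        field_simp; ring
    _ ≤ (x + x / (L - 1)) / (log (x + x / (L - 1)) - 1) :=
        div_le_div_of_nonneg_left (by positivity) (by linarith) (by linarith)

lemma div_add_div_sq_lt_mul_div_sq_add_one {x L : ℝ} (hx : 0 < x) (hL : 5 ≤ L) :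
    x / (L - 1.1) + 0.9 * x / L ^ 2 < x * L / ((L - 1) ^ 2 + 1) := by
  have h1 : 0 < L - 1.1 := by linarith
  have h2 : 0 < L ^ 2 := by positivity
  have h3 : 0 < (L - 1) ^ 2 + 1 := by positivity
  rw [div_add_div _ _ h1.ne' h2.ne', div_lt_div_iff₀ (by positivity) h3]
  have hquad : 0 < 0.79 * L ^ 2 - 3.78 * L + 1.98 := by nlinarith
  nlinarith [mul_pos (mul_pos hx h2) hquad]

lemma Real.log_sq_le_sixteen_mul_sqrt {x : ℝ} (hx : 1 ≤ x) : log x ^ 2 ≤ 16 * √x := by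
  have hlog := log_le_rpow_div (by linarith : (0 : ℝ) ≤ x) (by norm_num : (0 : ℝ) < 1 / 4)
  have hroot : (x ^ (1 / 4 : ℝ)) ^ 2 = √x := by
    rw [sqrt_eq_rpow, ← rpow_natCast, ← rpow_mul (by linarith)]; norm_num
  calc log x ^ 2 ≤ (x ^ (1 / 4 : ℝ) / (1 / 4)) ^ 2 := by
        gcongr; exact log_nonneg hx
    _ = 16 * √x := by rw [div_pow, hroot]; ring

theorem real_ineq_chain (p : ℝ) (hp : 60184 < p) :
    (p + p / (Real.log p - 1)) / (Real.log (p + p / (Real.log p - 1)) - 1)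
        - p / (Real.log p - 1.1) > 0.9 * p / (Real.log p) ^ 2 ∧
      0.9 * p / (Real.log p) ^ 2 > 1 := by
  have hp0 : 0 < p := by linarith
  have hL : 5 < log p := (lt_log_iff_exp_lt hp0).2 (exp_five_lt.trans (by linarith))
  constructor
  · have hq := mul_log_div_le_div_log_add_div_sub_one hp0 (by linarith)
    have hpoly := div_add_div_sq_lt_mul_div_sq_add_one hp0 hL.le
    linarith
  · have hLsq := log_sq_le_sixteen_mul_sqrt (x := p) (by linarith)
    have hsqrt : 18 < √p := lt_sqrt_of_sq_lt (by linarith)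
    rw [gt_iff_lt, lt_div_iff₀ (by positivity)]
    nlinarith [sq_sqrt hp0.le]
end

section
/- For every prime p with p < 60184, there is at least one prime in the interval (p, p + π(p)]. -/
def smallPrimes : List ℕ :=
  [2,3,5,7,11,13,17,19,23,29,31,37,41,43,47,53,59,61,67,71,73,79,83,89,97,
   101,103,107,109,113,127,131,137,139,149,151,157,163,167,173,179,181,191,
   193,197,199,211,223,227,229,233,239,241,251,257,263]

def Pnum : ℕ := 4343825573072363215565699965702960859395702691913457985649917484000586881515424606782330843435957697765930

def isPrimeB (n : ℕ) : Bool :=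
  if n ≤ 263 then smallPrimes.contains n else Nat.gcd Pnum n == 1

def hasPrimeIn : ℕ → ℕ → Bool := fun a k =>
  Nat.rec (fun _ => false) (fun _ ih a => isPrimeB (a+1) || ih (a+1)) k a

def go : ℕ → ℕ → ℕ → Bool := fun f =>
  Nat.rec (fun _ _ => true)
    (fun _ ih n cnt =>
      if isPrimeB n then
        (decide (60184 ≤ n) || (decide (n + cnt + 1 ≤ 69169) && hasPrimeIn n (cnt+1)))
          && ih (n+2) (cnt+1)
      else ih (n+2) cnt) f

lemma hasPrimeIn_succ (a k : ℕ) :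
    hasPrimeIn a (k+1) = (isPrimeB (a+1) || hasPrimeIn (a+1) k) := rfl

lemma go_succ (f n cnt : ℕ) :
    go (f+1) n cnt =
      (if isPrimeB n then
        (decide (60184 ≤ n) || (decide (n + cnt + 1 ≤ 69169) && hasPrimeIn n (cnt+1)))
          && go f (n+2) (cnt+1)
      else go f (n+2) cnt) := rfl

set_option maxRecDepth 10000 in
lemma smallPrimes_prime : ∀ q ∈ smallPrimes, q.Prime := by decide

lemma smallPrimes_le : ∀ q ∈ smallPrimes, q ≤ 263 := by decide

set_option maxRecDepth 10000 in
lemma mem_smallPrimes : ∀ q < 264, q.Prime → q ∈ smallPrimes := by decide +kernel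

lemma Pnum_eq : Pnum = smallPrimes.prod := by decide

lemma isPrimeB_of_prime {n : ℕ} (h : n.Prime) : isPrimeB n = true := by
  unfold isPrimeB
  by_cases hn : n ≤ 263
  · rw [if_pos hn]
    simpa using mem_smallPrimes n (by omega) h
  · rw [if_neg hn, beq_iff_eq]
    by_contra hg
    -- gcd Pnum n divides n, n prime, so gcd = n, hence n ∣ Pnum
    have hd : Nat.gcd Pnum n ∣ n := Nat.gcd_dvd_right _ _
    rcases (Nat.Prime.eq_one_or_self_of_dvd h _ hd) with h1 | h1
    · exact hg h1
    · have hdvd : n ∣ Pnum := h1 ▸ Nat.gcd_dvd_left _ _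
      rw [Pnum_eq] at hdvd
      obtain ⟨a, ha, hna⟩ := (h.prime.dvd_prod_iff).mp hdvd
      have := Nat.Prime.eq_one_or_self_of_dvd (smallPrimes_prime a ha) _ hna
      have := smallPrimes_le a ha
      have := h.two_le
      omega

lemma prime_of_isPrimeB {n : ℕ} (hn : n ≤ 69169) (h : isPrimeB n = true) : n.Prime := by
  unfold isPrimeB at h
  by_cases hb : n ≤ 263
  · rw [if_pos hb] at h
    exact smallPrimes_prime n (by simpa using h)
  · rw [if_neg hb, beq_iff_eq] at h
    by_contra hnp
    have h2 : 2 ≤ n := by omega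
    have hmp := Nat.minFac_prime (show n ≠ 1 by omega)
    have hsq : n.minFac ^ 2 ≤ n := Nat.minFac_sq_le_self (by omega) hnp
    have hle : n.minFac ≤ 263 := by nlinarith [sq_nonneg n.minFac, pow_two n.minFac ▸ hsq]
    have hmem := mem_smallPrimes n.minFac (by omega) hmp
    have hdvdP : n.minFac ∣ Pnum := Pnum_eq ▸ List.dvd_prod hmem
    have hdvdg : n.minFac ∣ Nat.gcd Pnum n := Nat.dvd_gcd hdvdP (Nat.minFac_dvd n)
    rw [h] at hdvdg
    have := Nat.le_of_dvd one_pos hdvdg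
    have := hmp.two_le
    omega

lemma hasPrimeIn_sound : ∀ (k a : ℕ), a + k ≤ 69169 → hasPrimeIn a k = true →
    ∃ q, q.Prime ∧ a < q ∧ q ≤ a + k := by
  intro k
  induction k with
  | zero => intro a _ h; exact absurd h (by simp [hasPrimeIn])
  | succ k ih =>
    intro a hb h
    rw [hasPrimeIn_succ, Bool.or_eq_true] at h
    rcases h with h | h
    · exact ⟨a+1, prime_of_isPrimeB (by omega) h, by omega, by omega⟩
    · obtain ⟨q, hq, h1, h2⟩ := ih (a+1) (by omega) h
      exact ⟨q, hq, by omega, by omega⟩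

lemma not_prime_succ_even {n : ℕ} (h1 : n % 2 = 1) (h3 : 3 ≤ n) : ¬ (n+1).Prime := by
  intro h
  rcases h.eq_one_or_self_of_dvd 2 (Nat.dvd_of_mod_eq_zero (by omega)) with h' | h' <;> omega

lemma go_sound : ∀ (f n cnt : ℕ), go f n cnt = true → n % 2 = 1 → 3 ≤ n →
    Nat.count Nat.Prime n = cnt →
    ∀ p, p.Prime → n ≤ p → p < n + 2*f → p < 60184 →
    ∃ q, q.Prime ∧ p < q ∧ q ≤ p + Nat.primeCounting p := by
  intro f
  induction f with
  | zero => intro n cnt _ _ _ _ p _ h1 h2 _; omega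
  | succ f ih =>
    intro n cnt hgo hodd h3 hcnt p hp hnp hpf hlt
    have hpodd : p % 2 = 1 := by
      rcases hp.eq_two_or_odd with h | h
      · omega
      · exact h
    rw [go_succ] at hgo
    by_cases hb : isPrimeB n = true
    · rw [if_pos hb, Bool.and_eq_true] at hgo
      obtain ⟨h1, hrest⟩ := hgo
      have hnprime : n.Prime := prime_of_isPrimeB (by omega) hb
      have hc1 : Nat.count Nat.Prime (n+1) = cnt + 1 := by
        rw [Nat.count_succ, if_pos hnprime, hcnt]
      have hc2 : Nat.count Nat.Prime (n+2) = cnt + 1 := by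
        rw [show n+2 = (n+1)+1 from rfl, Nat.count_succ,
          if_neg (not_prime_succ_even hodd h3), hc1]
      rcases Nat.eq_or_lt_of_le hnp with heq | hgt
      · -- p = n
        subst heq
        rw [Bool.or_eq_true] at h1
        rcases h1 with h1 | h1
        · rw [decide_eq_true_eq] at h1; omega
        · rw [Bool.and_eq_true, decide_eq_true_eq] at h1
          obtain ⟨hb69, hfind⟩ := h1
          obtain ⟨q, hq, hq1, hq2⟩ := hasPrimeIn_sound (cnt+1) n (by omega) hfind
          refine ⟨q, hq, hq1, ?_⟩
          have hpc : Nat.primeCounting n = cnt + 1 := by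
            show Nat.count Nat.Prime (n+1) = cnt + 1
            exact hc1
          omega
      · exact ih (n+2) (cnt+1) hrest (by omega) (by omega) hc2 p hp (by omega) (by omega) hlt
    · rw [if_neg hb] at hgo
      have hnn : ¬ n.Prime := fun h => hb (isPrimeB_of_prime h)
      have hc2 : Nat.count Nat.Prime (n+2) = cnt := by
        rw [show n+2 = (n+1)+1 from rfl, Nat.count_succ,
          if_neg (not_prime_succ_even hodd h3), Nat.count_succ, if_neg hnn, hcnt]
        omega
      have : n ≠ p := fun h => hnn (h ▸ hp)
      exact ih (n+2) cnt hgo (by omega) (by omega) hc2 p hp (by omega) (by omega) hlt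

set_option maxRecDepth 1000000 in
lemma go_main : go 30091 3 1 = true := by decide +kernel

theorem small_case_verification (p : ℕ) (hp : p.Prime) (hlt : p < 60184) :
    ∃ q, q.Prime ∧ p < q ∧ q ≤ p + Nat.primeCounting p := by
  rcases hp.eq_two_or_odd with h2 | hodd
  · subst h2
    refine ⟨3, by norm_num, by omega, ?_⟩
    have : Nat.primeCounting 2 = 1 := by decide
    omega
  · have h3 : 3 ≤ p := by
      have := hp.two_le
      omega
    exact go_sound 30091 3 1 go_main (by omega) (by omega) (by decide) p hp h3
      (by omega) hlt
end

section
/- For every prime p with 5 ≤ p < 60184, the next prime q after p satisfies q - p < p/(log p - 1.1). -/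
/-!
Cut `[4, 2 ^ 16)` into the dyadic blocks `[2 ^ j, 2 ^ (j + 1))`. For `x` in such a block,
`log x < (j + 1) log 2 < 0.7 (j + 1)` and `2 ^ j ≤ x`, so it suffices that on the block every
window `(x, x + g]` contains a prime, where `g = gapBound j` is the largest integer with
`g (0.7 (j + 1) - 1.1) ≤ 2 ^ j`. This is checked by a kernel computation that walks from prime
to prime through each block; a candidate `m` is certified prime by `m < (k + 1) ^ 2` together
with `m` being coprime to `k !`, which rules out every prime factor up to `√m`.
-/

open scoped Nat

theorem Nat.prime_of_coprime_factorial {k m : ℕ} (hm1 : 1 < m) (hmk : m < (k + 1) ^ 2)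
    (h : m.Coprime k !) : m.Prime := by
  by_contra hnp
  have hk : k < m.minFac := (Nat.coprime_factorial_iff hm1.ne').1 h
  have hsq : m.minFac ^ 2 ≤ m := Nat.minFac_sq_le_self (by omega) hnp
  have : (k + 1) ^ 2 ≤ m.minFac ^ 2 := Nat.pow_le_pow_left hk 2
  omega

def factorialSieve (k m : ℕ) : Bool := decide (1 < m ∧ m < (k + 1) ^ 2 ∧ m.Coprime k !)

theorem prime_of_factorialSieve {k m : ℕ} (h : factorialSieve k m = true) : m.Prime :=
  have ⟨hm1, hmk, hcop⟩ := of_decide_eq_true h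
  Nat.prime_of_coprime_factorial hm1 hmk hcop

def PrimeGapsLE (g a b : ℕ) : Prop :=
  ∀ x, a ≤ x → x < b → ∃ r, r.Prime ∧ x < r ∧ r ≤ x + g

def gapChainCheck (t : ℕ → Bool) (g b : ℕ) : (fuel x : ℕ) → Bool
  | 0, x => b ≤ x
  | n + 1, x => b ≤ x ||
      match (List.range' (x + 1) g).find? t with
      | some m => gapChainCheck t g b n m
      | none => false

theorem primeGapsLE_of_gapChainCheck {t : ℕ → Bool} (ht : ∀ m, t m = true → m.Prime)
    {g b : ℕ} (fuel x : ℕ) (h : gapChainCheck t g b fuel x = true) : PrimeGapsLE g x b := by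
  induction fuel generalizing x with
  | zero =>
    intro y hxy hyb
    simp only [gapChainCheck, decide_eq_true_eq] at h
    omega
  | succ fuel ih =>
    intro y hxy hyb
    simp only [gapChainCheck, Bool.or_eq_true, decide_eq_true_eq] at h
    rcases h with hbx | h
    · omega
    split at h
    next m hm =>
      have hxm := List.mem_range'_1.1 (List.mem_of_find?_eq_some hm)
      rcases lt_or_ge y m with hym | hmy
      · exact ⟨m, ht m (List.find?_some hm), hym, by omega⟩
      · exact ih m h y hmy hyb
    next => exact absurd h Bool.false_ne_true

def gapBound (j : ℕ) : ℕ := 10 * 2 ^ j / (7 * j - 4)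

theorem primeGapsLE_gapBound {j : ℕ} (hj2 : 2 ≤ j) (hj : j < 16) :
    PrimeGapsLE (gapBound j) (2 ^ j) (2 ^ (j + 1)) := by
  -- `(2 ^ ((j + 3) / 2) + 1) ^ 2` exceeds `2 ^ (j + 1) + gapBound j`, so the sieve accepts
  -- every prime the walk meets.
  have hcheck : (List.range' 2 14).all (fun j => gapChainCheck (factorialSieve (2 ^ ((j + 3) / 2)))
      (gapBound j) (2 ^ (j + 1)) (2 ^ j) (2 ^ j)) = true := by
    decide +kernel
  exact primeGapsLE_of_gapChainCheck (fun _ => prime_of_factorialSieve) _ _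
    (List.all_eq_true.1 hcheck j (List.mem_range'_1.2 ⟨hj2, by omega⟩))

theorem gapBound_lt_div_log_sub {j x : ℕ} (hj : 2 ≤ j) (hjx : 2 ^ j ≤ x)
    (hxj : x < 2 ^ (j + 1)) : (gapBound j : ℝ) < x / (Real.log x - 1.1) := by
  have hx : (0 : ℝ) < x := by exact_mod_cast lt_of_lt_of_le (by positivity) hjx
  have hlog_ge : j * Real.log 2 ≤ Real.log x := by
    rw [← Real.log_pow]
    exact Real.log_le_log (by positivity) (by exact_mod_cast hjx)
  have hlog_lt : Real.log x < (j + 1) * Real.log 2 := by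
    rw [← Nat.cast_succ, ← Real.log_pow]
    exact Real.log_lt_log hx (by exact_mod_cast hxj)
  have hj' : (2 : ℝ) ≤ j := by exact_mod_cast hj
  have hg : (gapBound j : ℝ) * (7 * j - 4) ≤ 10 * 2 ^ j := by
    have := Nat.div_mul_le_self (10 * 2 ^ j) (7 * j - 4)
    rw [← Nat.cast_le (α := ℝ)] at this
    push_cast [show 4 ≤ 7 * j by omega] at this
    exact this
  rw [lt_div_iff₀ (by nlinarith [Real.log_two_gt_d9])]
  rcases (gapBound j).eq_zero_or_pos with h0 | hpos
  · simpa [h0] using hx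
  · have : (0 : ℝ) < gapBound j := by exact_mod_cast hpos
    have : (2 : ℝ) ^ j ≤ x := by exact_mod_cast hjx
    nlinarith [Real.log_two_lt_d9]

theorem small_range_corollary_general (p q : ℕ) (h5 : 5 ≤ p) (hlt : p < 60184)
    (hnext : ∀ r, r.Prime → p < r → q ≤ r) :
    ((q : ℝ) - p) < p / (Real.log p - 1.1) := by
  set j := Nat.log 2 p
  have hjp : 2 ^ j ≤ p := Nat.pow_log_le_self 2 (by omega)
  have hpj : p < 2 ^ (j + 1) := Nat.lt_pow_succ_log_self (by norm_num) p
  have hj2 : 2 ≤ j := Nat.le_log_of_pow_le (by norm_num) (by omega)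
  have hj16 : j < 16 := Nat.log_lt_of_lt_pow (by omega) (by omega)
  obtain ⟨r, hr, hpr, hrp⟩ := primeGapsLE_gapBound hj2 hj16 p hjp hpj
  have hqr : (q : ℝ) ≤ p + gapBound j := by exact_mod_cast (hnext r hr hpr).trans hrp
  calc (q : ℝ) - p ≤ gapBound j := by linarith
    _ < p / (Real.log p - 1.1) := gapBound_lt_div_log_sub hj2 hjp hpj

theorem small_range_corollary (p q : ℕ) (hp : p.Prime) (h5 : 5 ≤ p) (hlt : p < 60184)
    (hq : q.Prime) (hpq : p < q) (hnext : ∀ r, r.Prime → p < r → q ≤ r) :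
    ((q : ℝ) - p) < p / (Real.log p - 1.1) :=
  small_range_corollary_general p q h5 hlt hnext
end
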